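/- (Bijectivity of the SU-decomposition on the regular set) The map (R, p, U) ↦ S(R,p) U is a bijection from the set {(R, p, U) : R ∈ SO(3), p ∈ ℝ³, U = [U₁;U₂] with U₁, U₂ upper-triangular, (U₁)₁₁ > 0, (U₁)₂₂ > 0} onto the set of 6×3 matrices Ξ whose upper block A has nonzero first column and linearly independent first two columns. -/

import Mathlib

open Matrix

/-- Cross product in ℝ³. -/
def cross3 (a b : Fin 3 → ℝ) : Fin 3 → ℝ :=
  ![a 1 * b 2 - a 2 * b 1, a 2 * b 0 - a 0 * b 2, a 0 * b 1 - a 1 * b 0]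

/-- Euclidean norm in ℝ³. -/
noncomputable def enorm3 (v : Fin 3 → ℝ) : ℝ := Real.sqrt (∑ i, v i ^ 2)

/-- Dot product in ℝ³. -/
def dot3 (a b : Fin 3 → ℝ) : ℝ := ∑ i, a i * b i

/-- Membership in SO(3). -/
def SO3 (R : Matrix (Fin 3) (Fin 3) ℝ) : Prop := Rᵀ * R = 1 ∧ R.det = 1

/-- Skew-symmetric cross-product matrix [p]×. -/
def skew3 (p : Fin 3 → ℝ) : Matrix (Fin 3) (Fin 3) ℝ :=
  !![0, -p 2, p 1; p 2, 0, -p 0; -p 1, p 0, 0]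

/-- The 6×6 screw-transformation matrix S(R,p) = [[R,0],[[p]×R,R]]. -/
def Scr (R : Matrix (Fin 3) (Fin 3) ℝ) (p : Fin 3 → ℝ) :
    Matrix (Fin 3 ⊕ Fin 3) (Fin 3 ⊕ Fin 3) ℝ :=
  Matrix.fromBlocks R 0 (skew3 p * R) R

/-- Upper-triangular 3×3 matrix. -/
def UT3 (M : Matrix (Fin 3) (Fin 3) ℝ) : Prop :=
  ∀ i j : Fin 3, (j : ℕ) < (i : ℕ) → M i j = 0

/-- The map (R, p, (U₁, U₂)) ↦ S(R,p) · [U₁; U₂]. -/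
noncomputable def SUmap
    (x : (Matrix (Fin 3) (Fin 3) ℝ × (Fin 3 → ℝ)) ×
         (Matrix (Fin 3) (Fin 3) ℝ × Matrix (Fin 3) (Fin 3) ℝ)) :
    Matrix (Fin 3 ⊕ Fin 3) (Fin 3) ℝ :=
  Scr x.1.1 x.1.2 *
    Matrix.of (Sum.elim (fun i j => x.2.1 i j) (fun i j => x.2.2 i j))

/-!
Write `Ξ = [A; B]`. Since `Rᵀ [p]× R = [Rᵀ p]×` for `R ∈ SO(3)`, the equation `S(R,p) [U₁; U₂] = Ξ`
splits into `A = R U₁` and `Rᵀ B = [q]× U₁ + U₂` with `q = Rᵀ p`. The first is a QR decomposition of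
`A`: the first two columns of `A` determine, by Gram–Schmidt completed with a cross product, the
only possible `R`, and it exists exactly when these columns are independent. In the second, the
strictly lower entries of `[q]× U₁` are `q₂ u₀₀`, `-q₁ u₀₀` and `q₀ u₁₁ - q₁ u₀₁`, a triangular
system in `q` with nonzero pivots; so `q` is unique, and `U₂` is what remains.
-/

lemma skew3_mulVec (p w : Fin 3 → ℝ) : skew3 p *ᵥ w = p ⨯₃ w := by
  ext i
  fin_cases i <;> simp [skew3, cross_apply, mulVec, dotProduct, Fin.sum_univ_three] <;> ring

lemma skew3_sub (p q : Fin 3 → ℝ) : skew3 (p - q) = skew3 p - skew3 q := by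
  ext i j
  fin_cases i <;> fin_cases j <;> simp [skew3] <;> ring

lemma cross_mulVec_mulVec {α : Type*} [CommRing α] (M : Matrix (Fin 3) (Fin 3) α)
    (a b : Fin 3 → α) : (M *ᵥ a) ⨯₃ (M *ᵥ b) = M.adjugateᵀ *ᵥ (a ⨯₃ b) := by
  ext i
  fin_cases i <;>
    simp [cross_apply, mulVec, dotProduct, Fin.sum_univ_three, adjugate_fin_three] <;> ring

namespace SO3

variable {R : Matrix (Fin 3) (Fin 3) ℝ}

lemma mul_transpose (h : SO3 R) : R * Rᵀ = 1 :=
  mul_eq_one_comm.mp h.1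

lemma transpose (h : SO3 R) : SO3 Rᵀ :=
  ⟨by rw [transpose_transpose, h.mul_transpose], by rw [det_transpose, h.2]⟩

lemma adjugate_eq (h : SO3 R) : R.adjugate = Rᵀ := by
  calc R.adjugate = R.adjugate * (R * Rᵀ) := by rw [h.mul_transpose, Matrix.mul_one]
    _ = Rᵀ := by rw [← Matrix.mul_assoc, adjugate_mul, h.2, one_smul, Matrix.one_mul]

lemma mulVec_cross (h : SO3 R) (a b : Fin 3 → ℝ) :
    R *ᵥ (a ⨯₃ b) = (R *ᵥ a) ⨯₃ (R *ᵥ b) := by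
  rw [cross_mulVec_mulVec, h.adjugate_eq, transpose_transpose]

lemma mulVec_injective (h : SO3 R) : Function.Injective (R *ᵥ ·) :=
  Function.LeftInverse.injective (g := (Rᵀ *ᵥ ·)) fun v => by
    simp only [mulVec_mulVec, h.1, one_mulVec]

lemma dotProduct_mulVec_mulVec (h : SO3 R) (v w : Fin 3 → ℝ) :
    (R *ᵥ v) ⬝ᵥ (R *ᵥ w) = v ⬝ᵥ w := by
  rw [dotProduct_mulVec, vecMul_mulVec, h.1, vecMul_one]

lemma col_dotProduct_self (h : SO3 R) (j : Fin 3) : R.col j ⬝ᵥ R.col j = 1 := by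
  rw [← mulVec_single_one, h.dotProduct_mulVec_mulVec]
  simp

lemma skew3_mulVec_mul (h : SO3 R) (q : Fin 3 → ℝ) :
    skew3 (R *ᵥ q) * R = R * skew3 q := by
  refine Matrix.mulVec_injective (funext fun v => ?_)
  simp only [← mulVec_mulVec, skew3_mulVec, h.mulVec_cross]

lemma col_cross (h : SO3 R) : R.col 2 ⨯₃ R.col 0 = R.col 1 := by
  have e : (Pi.single 2 1 : Fin 3 → ℝ) ⨯₃ Pi.single 0 1 = Pi.single 1 1 := by
    ext i; fin_cases i <;> simp [cross_apply]
  simp only [← mulVec_single_one, ← h.mulVec_cross, e]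

end SO3

lemma enorm3_eq_sqrt_dotProduct (v : Fin 3 → ℝ) : enorm3 v = √(v ⬝ᵥ v) := by
  simp only [enorm3, dotProduct, sq]

lemma enorm3_pos {v : Fin 3 → ℝ} (hv : v ≠ 0) : 0 < enorm3 v := by
  rw [enorm3_eq_sqrt_dotProduct, Real.sqrt_pos]
  simpa using dotProduct_self_star_pos_iff.mpr hv

lemma enorm3_mul_self (v : Fin 3 → ℝ) : enorm3 v * enorm3 v = v ⬝ᵥ v := by
  have hv : 0 ≤ v ⬝ᵥ v := by simpa using dotProduct_self_star_nonneg v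
  rw [enorm3_eq_sqrt_dotProduct, Real.mul_self_sqrt hv]

lemma enorm3_smul {c : ℝ} (hc : 0 ≤ c) (v : Fin 3 → ℝ) : enorm3 (c • v) = c * enorm3 v := by
  rw [enorm3_eq_sqrt_dotProduct, enorm3_eq_sqrt_dotProduct, smul_dotProduct, dotProduct_smul,
    smul_eq_mul, smul_eq_mul, ← mul_assoc, Real.sqrt_mul (mul_self_nonneg c),
    Real.sqrt_mul_self hc]

noncomputable def normalize3 (v : Fin 3 → ℝ) : Fin 3 → ℝ := (enorm3 v)⁻¹ • v

lemma normalize3_dotProduct_self {v : Fin 3 → ℝ} (hv : v ≠ 0) :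
    normalize3 v ⬝ᵥ normalize3 v = 1 := by
  have := (enorm3_pos hv).ne'
  rw [normalize3, smul_dotProduct, dotProduct_smul, ← enorm3_mul_self, smul_eq_mul,
    smul_eq_mul]
  field_simp

lemma normalize3_of_dotProduct_self {v : Fin 3 → ℝ} (hv : v ⬝ᵥ v = 1) : normalize3 v = v := by
  rw [normalize3, enorm3_eq_sqrt_dotProduct, hv, Real.sqrt_one, inv_one, one_smul]

lemma normalize3_smul {c : ℝ} (hc : 0 < c) (v : Fin 3 → ℝ) :
    normalize3 (c • v) = normalize3 v := by
  rw [normalize3, enorm3_smul hc.le, smul_smul, _root_.mul_inv_rev, mul_assoc,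
    inv_mul_cancel₀ hc.ne', mul_one, normalize3]

lemma cross_dot_left_eq_zero (v w : Fin 3 → ℝ) : v ⨯₃ w ⬝ᵥ v = 0 := by
  rw [dotProduct_comm, dot_self_cross]

lemma cross_dot_right_eq_zero (v w : Fin 3 → ℝ) : v ⨯₃ w ⬝ᵥ w = 0 := by
  rw [dotProduct_comm, dot_cross_self]

def triad (u w : Fin 3 → ℝ) : Matrix (Fin 3) (Fin 3) ℝ := Matrix.of ![u, w ⨯₃ u, w]

lemma triad_mul_apply (u w : Fin 3 → ℝ) (A : Matrix (Fin 3) (Fin 3) ℝ) (i j : Fin 3) :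
    (triad u w * A) i j = ![u, w ⨯₃ u, w] i ⬝ᵥ A.col j :=
  rfl

lemma SO3_transpose_triad {u w : Fin 3 → ℝ} (hu : u ⬝ᵥ u = 1) (hw : w ⬝ᵥ w = 1)
    (huw : u ⬝ᵥ w = 0) : SO3 (triad u w)ᵀ := by
  have hwu : w ⬝ᵥ u = 0 := by rw [dotProduct_comm, huw]
  refine ⟨?_, ?_⟩
  · ext i j
    change ![u, w ⨯₃ u, w] i ⬝ᵥ ![u, w ⨯₃ u, w] j = (1 : Matrix (Fin 3) (Fin 3) ℝ) i j
    fin_cases i <;> fin_cases j <;>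
      simp [cross_dot_cross, hu, hw, huw, hwu, cross_dot_left_eq_zero, cross_dot_right_eq_zero]
  · rw [det_transpose]
    change det ![u, w ⨯₃ u, w] = 1
    rw [← triple_product_eq_det, cross_cross_eq_smul_sub_smul]
    simp [hu, hw, huw]

lemma SO3.triad_col {R : Matrix (Fin 3) (Fin 3) ℝ} (h : SO3 R) :
    triad (R.col 0) (R.col 2) = Rᵀ := by
  ext i j
  fin_cases i <;> simp [triad, h.col_cross]

lemma UT3_iff {M : Matrix (Fin 3) (Fin 3) ℝ} : UT3 M ↔ M 1 0 = 0 ∧ M 2 0 = 0 ∧ M 2 1 = 0 := by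
  refine ⟨fun h => ⟨h 1 0 (by decide), h 2 0 (by decide), h 2 1 (by decide)⟩, ?_⟩
  rintro ⟨h10, h20, h21⟩ i j hij
  fin_cases i <;> fin_cases j <;> simp_all

namespace UT3

variable {U : Matrix (Fin 3) (Fin 3) ℝ}

lemma sub {M : Matrix (Fin 3) (Fin 3) ℝ} (hM : UT3 M) (hU : UT3 U) : UT3 (M - U) :=
  fun i j hij => by rw [Matrix.sub_apply, hM i j hij, hU i j hij, sub_zero]

lemma col_zero (hU : UT3 U) : U.col 0 = U 0 0 • Pi.single 0 1 := by
  obtain ⟨h10, h20, -⟩ := UT3_iff.mp hU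
  ext i
  fin_cases i <;> simp [h10, h20]

lemma col_zero_cross_col_one (hU : UT3 U) :
    U.col 0 ⨯₃ U.col 1 = (U 0 0 * U 1 1) • Pi.single 2 1 := by
  obtain ⟨h10, h20, h21⟩ := UT3_iff.mp hU
  ext i
  fin_cases i <;> simp [cross_apply, h10, h20, h21]

lemma skew3_mul_apply (hU : UT3 U) (q : Fin 3 → ℝ) :
    (skew3 q * U) 1 0 = q 2 * U 0 0 ∧ (skew3 q * U) 2 0 = -(q 1 * U 0 0) ∧
      (skew3 q * U) 2 1 = -(q 1 * U 0 1) + q 0 * U 1 1 := by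
  obtain ⟨h10, h20, h21⟩ := UT3_iff.mp hU
  refine ⟨?_, ?_, ?_⟩ <;> simp [skew3, mul_apply, Fin.sum_univ_three, h10, h20, h21]

lemma eq_zero_of_skew3_mul (hU : UT3 U) (h00 : U 0 0 ≠ 0) (h11 : U 1 1 ≠ 0) {d : Fin 3 → ℝ}
    (hd : UT3 (skew3 d * U)) : d = 0 := by
  obtain ⟨e10, e20, e21⟩ := hU.skew3_mul_apply d
  obtain ⟨h10, h20, h21⟩ := UT3_iff.mp hd
  have hd2 : d 2 = 0 := by simpa [h00] using e10.symm.trans h10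
  have hd1 : d 1 = 0 := by simpa [h00] using e20.symm.trans h20
  have hd0 : d 0 = 0 := by simpa [hd1, h11] using e21.symm.trans h21
  ext i
  fin_cases i <;> assumption

end UT3

/-- Back substitution for the vector `q` making `M - [q]× U` upper triangular. -/
noncomputable def skewSolve (U M : Matrix (Fin 3) (Fin 3) ℝ) : Fin 3 → ℝ :=
  ![(M 2 1 - M 2 0 * U 0 1 / U 0 0) / U 1 1, -M 2 0 / U 0 0, M 1 0 / U 0 0]

section

variable {U M : Matrix (Fin 3) (Fin 3) ℝ}

lemma UT3_sub_skew3_skewSolve_mul (hU : UT3 U) (h00 : U 0 0 ≠ 0) (h11 : U 1 1 ≠ 0) :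
    UT3 (M - skew3 (skewSolve U M) * U) := by
  obtain ⟨e10, e20, e21⟩ := hU.skew3_mul_apply (skewSolve U M)
  rw [UT3_iff, Matrix.sub_apply, Matrix.sub_apply, Matrix.sub_apply, e10, e20, e21]
  simp only [skewSolve, cons_val_zero, cons_val_one, cons_val_two, head_cons, tail_cons]
  refine ⟨?_, ?_, ?_⟩ <;> field_simp <;> ring

lemma skewSolve_eq (hU : UT3 U) (h00 : U 0 0 ≠ 0) (h11 : U 1 1 ≠ 0) {q : Fin 3 → ℝ}
    (hq : UT3 (M - skew3 q * U)) : skewSolve U M = q := by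
  have hdiff := (UT3_sub_skew3_skewSolve_mul (M := M) hU h00 h11).sub hq
  rw [sub_sub_sub_cancel_left, ← sub_mul, ← skew3_sub] at hdiff
  exact (sub_eq_zero.mp (hU.eq_zero_of_skew3_mul h00 h11 hdiff)).symm

end

lemma ne_zero_of_cross_ne_zero {a b : Fin 3 → ℝ} (h : a ⨯₃ b ≠ 0) : a ≠ 0 := by
  rintro rfl
  simp at h

/-- The rotation factor of the QR decomposition of `A`, by Gram–Schmidt on its first two columns. -/
noncomputable def gsRot (A : Matrix (Fin 3) (Fin 3) ℝ) : Matrix (Fin 3) (Fin 3) ℝ :=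
  (triad (normalize3 (A.col 0)) (normalize3 (A.col 0 ⨯₃ A.col 1)))ᵀ

lemma SO3_gsRot {A : Matrix (Fin 3) (Fin 3) ℝ} (h : A.col 0 ⨯₃ A.col 1 ≠ 0) : SO3 (gsRot A) := by
  refine SO3_transpose_triad (normalize3_dotProduct_self (ne_zero_of_cross_ne_zero h))
    (normalize3_dotProduct_self h) ?_
  simp [normalize3, dot_self_cross]

lemma UT3_transpose_gsRot_mul (A : Matrix (Fin 3) (Fin 3) ℝ) : UT3 ((gsRot A)ᵀ * A) := by
  simp [UT3_iff, gsRot, triad_mul_apply, normalize3, cross_dot_left_eq_zero,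
    cross_dot_right_eq_zero]

lemma transpose_gsRot_mul_apply_zero_zero (A : Matrix (Fin 3) (Fin 3) ℝ) :
    ((gsRot A)ᵀ * A) 0 0 = enorm3 (A.col 0) := by
  simp [gsRot, triad_mul_apply, normalize3, ← enorm3_mul_self, ← mul_assoc, inv_mul_mul_self]

lemma transpose_gsRot_mul_apply_one_one (A : Matrix (Fin 3) (Fin 3) ℝ) :
    ((gsRot A)ᵀ * A) 1 1 = enorm3 (A.col 0 ⨯₃ A.col 1) / enorm3 (A.col 0) := by
  simp [gsRot, triad_mul_apply, normalize3, dotProduct_comm _ (A.col 1),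
    triple_product_permutation (A.col 1), ← enorm3_mul_self, ← mul_assoc, inv_mul_mul_self,
    div_eq_inv_mul]

lemma gsRot_mul {R U : Matrix (Fin 3) (Fin 3) ℝ} (hR : SO3 R) (hU : UT3 U) (h00 : 0 < U 0 0)
    (h11 : 0 < U 1 1) : gsRot (R * U) = R := by
  have hcol : ∀ j, (R * U).col j = R *ᵥ U.col j := fun _ => rfl
  have hu : normalize3 ((R * U).col 0) = R.col 0 := by
    rw [hcol, hU.col_zero, mulVec_smul, mulVec_single_one, normalize3_smul h00,
      normalize3_of_dotProduct_self (hR.col_dotProduct_self 0)]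
  have hw : normalize3 ((R * U).col 0 ⨯₃ (R * U).col 1) = R.col 2 := by
    rw [hcol, hcol, ← hR.mulVec_cross, hU.col_zero_cross_col_one, mulVec_smul,
      mulVec_single_one, normalize3_smul (mul_pos h00 h11),
      normalize3_of_dotProduct_self (hR.col_dotProduct_self 2)]
  rw [gsRot, hu, hw, hR.triad_col, transpose_transpose]

lemma SUmap_eq (R : Matrix (Fin 3) (Fin 3) ℝ) (p : Fin 3 → ℝ) (U₁ U₂ : Matrix (Fin 3) (Fin 3) ℝ) :
    SUmap ((R, p), (U₁, U₂)) = fromRows (R * U₁) (skew3 p * R * U₁ + R * U₂) := by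
  rw [SUmap, Scr, show Matrix.of (Sum.elim (fun i j => U₁ i j) fun i j => U₂ i j) =
    fromRows U₁ U₂ from rfl, fromBlocks_mul_fromRows, Matrix.zero_mul, add_zero,
    Matrix.mul_assoc]

noncomputable def SUinv (Ξ : Matrix (Fin 3 ⊕ Fin 3) (Fin 3) ℝ) :
    (Matrix (Fin 3) (Fin 3) ℝ × (Fin 3 → ℝ)) ×
      (Matrix (Fin 3) (Fin 3) ℝ × Matrix (Fin 3) (Fin 3) ℝ) :=
  let R := gsRot Ξ.toRows₁
  let U₁ := Rᵀ * Ξ.toRows₁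
  let M := Rᵀ * Ξ.toRows₂
  let q := skewSolve U₁ M
  ((R, R *ᵥ q), (U₁, M - skew3 q * U₁))

section

variable {Ξ : Matrix (Fin 3 ⊕ Fin 3) (Fin 3) ℝ}

lemma SUinv_mem (h : Ξ.toRows₁.col 0 ⨯₃ Ξ.toRows₁.col 1 ≠ 0) :
    SO3 (SUinv Ξ).1.1 ∧ UT3 (SUinv Ξ).2.1 ∧ UT3 (SUinv Ξ).2.2 ∧
      0 < (SUinv Ξ).2.1 0 0 ∧ 0 < (SUinv Ξ).2.1 1 1 := by
  have h00 := transpose_gsRot_mul_apply_zero_zero Ξ.toRows₁ ▸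
    enorm3_pos (ne_zero_of_cross_ne_zero h)
  have h11 := transpose_gsRot_mul_apply_one_one Ξ.toRows₁ ▸
    div_pos (enorm3_pos h) (enorm3_pos (ne_zero_of_cross_ne_zero h))
  exact ⟨SO3_gsRot h, UT3_transpose_gsRot_mul _,
    UT3_sub_skew3_skewSolve_mul (UT3_transpose_gsRot_mul _) h00.ne' h11.ne', h00, h11⟩

lemma SUmap_SUinv (h : Ξ.toRows₁.col 0 ⨯₃ Ξ.toRows₁.col 1 ≠ 0) : SUmap (SUinv Ξ) = Ξ := by
  have hR := SO3_gsRot h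
  have hRRt : ∀ N : Matrix (Fin 3) (Fin 3) ℝ, gsRot Ξ.toRows₁ * ((gsRot Ξ.toRows₁)ᵀ * N) = N :=
    fun N => by rw [← Matrix.mul_assoc, hR.mul_transpose, Matrix.one_mul]
  rw [SUinv, SUmap_eq, hR.skew3_mulVec_mul, Matrix.mul_sub, Matrix.mul_assoc (gsRot _),
    add_sub_cancel, hRRt, hRRt, fromRows_toRows]

end

lemma SUmap_regular {R U₁ : Matrix (Fin 3) (Fin 3) ℝ} (p : Fin 3 → ℝ)
    (U₂ : Matrix (Fin 3) (Fin 3) ℝ) (hR : SO3 R) (hU₁ : UT3 U₁) (h00 : 0 < U₁ 0 0)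
    (h11 : 0 < U₁ 1 1) :
    (SUmap ((R, p), (U₁, U₂))).toRows₁.col 0 ⨯₃ (SUmap ((R, p), (U₁, U₂))).toRows₁.col 1 ≠ 0 := by
  rw [SUmap_eq, toRows₁_fromRows]
  change (R *ᵥ U₁.col 0) ⨯₃ (R *ᵥ U₁.col 1) ≠ 0
  rw [← hR.mulVec_cross, hU₁.col_zero_cross_col_one, ← mulVec_zero R]
  refine hR.mulVec_injective.ne (smul_ne_zero (mul_pos h00 h11).ne' ?_)
  simp

lemma SUinv_SUmap {R U₁ U₂ : Matrix (Fin 3) (Fin 3) ℝ} (p : Fin 3 → ℝ) (hR : SO3 R)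
    (hU₁ : UT3 U₁) (hU₂ : UT3 U₂) (h00 : 0 < U₁ 0 0) (h11 : 0 < U₁ 1 1) :
    SUinv (SUmap ((R, p), (U₁, U₂))) = ((R, p), (U₁, U₂)) := by
  have hRtR : ∀ N : Matrix (Fin 3) (Fin 3) ℝ, Rᵀ * (R * N) = N := fun N => by
    rw [← Matrix.mul_assoc, hR.1, Matrix.one_mul]
  have hM : Rᵀ * (skew3 p * R * U₁ + R * U₂) = skew3 (Rᵀ *ᵥ p) * U₁ + U₂ := by
    rw [Matrix.mul_add, hRtR, ← Matrix.mul_assoc, ← Matrix.mul_assoc,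
      ← hR.transpose.skew3_mulVec_mul, Matrix.mul_assoc _ Rᵀ, hR.1, Matrix.mul_one]
  have hq : skewSolve U₁ (skew3 (Rᵀ *ᵥ p) * U₁ + U₂) = Rᵀ *ᵥ p :=
    skewSolve_eq hU₁ h00.ne' h11.ne' (by rwa [add_sub_cancel_left])
  simp only [SUinv, SUmap_eq, toRows₁_fromRows, toRows₂_fromRows, gsRot_mul hR hU₁ h00 h11,
    hRtR, hM, hq, add_sub_cancel_left, mulVec_mulVec, hR.mul_transpose, one_mulVec]

theorem stmt19 :
    Set.BijOn SUmap
      {x | SO3 x.1.1 ∧ UT3 x.2.1 ∧ UT3 x.2.2 ∧ 0 < x.2.1 0 0 ∧ 0 < x.2.1 1 1}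
      {Ξ : Matrix (Fin 3 ⊕ Fin 3) (Fin 3) ℝ |
        (fun i => Ξ (Sum.inl i) 0) ≠ 0 ∧
        cross3 (fun i => Ξ (Sum.inl i) 0) (fun i => Ξ (Sum.inl i) 1) ≠ 0} := by
  refine Set.InvOn.bijOn (f' := SUinv) ⟨?_, ?_⟩ ?_ ?_
  · rintro ⟨⟨R, p⟩, U₁, U₂⟩ ⟨hR, hU₁, hU₂, h00, h11⟩
    exact SUinv_SUmap p hR hU₁ hU₂ h00 h11
  · rintro Ξ ⟨-, h⟩
    exact SUmap_SUinv h
  · rintro ⟨⟨R, p⟩, U₁, U₂⟩ ⟨hR, hU₁, -, h00, h11⟩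
    have h := SUmap_regular p U₂ hR hU₁ h00 h11
    exact ⟨ne_zero_of_cross_ne_zero h, h⟩
  · rintro Ξ ⟨-, h⟩
    exact SUinv_mem h
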